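/- arXiv:1401.5597 — 2 statements merged into one kernel-verified Lean document; each statement's English description precedes it below -/
import Mathlib

section
/- For every initial value u⁰ ∈ S = [0,1]⁴ the ZIP regulatory system has a unique global solution: there exists exactly one differentiable function u : [0,∞) → ℝ⁴ with u(0) = u⁰ and u'(t) = F(u(t)) for all t ≥ 0, and this solution satisfies u(t) ∈ S for all t ≥ 0. -/
/-!
Composing the field `F` with the coordinatewise projection `P` onto the cube `S` gives a bounded,
globally Lipschitz field, so `u' = F (P u)` has a solution on all of `ℝ` by Picard–Lindelöf.
On each face of `S` the field points inward (`Fᵢ ≥ 0` where `uᵢ = 0`, `Fᵢ ≤ 0` where `uᵢ = 1`),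
and `(F ∘ P)ᵢ` keeps that sign wherever `uᵢ` lies beyond the face, so no coordinate leaves
`[0, 1]` in forward time; on `S` the two fields agree. Uniqueness holds because `F`, being
polynomial, is Lipschitz on the compact set swept out by any two solutions on `[0, T]`.
-/

open Set Filter Topology NNReal

/-- The ZIP regulatory vector field on ℝ⁴ (components indexed by `Fin 4`). -/
noncomputable def zipField (κ γ₁ γ₂ γ₃ f : ℝ) (u : Fin 4 → ℝ) : Fin 4 → ℝ :=
  ![κ * (u 2) ^ 2 * (1 - u 0) - u 0,
    u 0 * f - u 1,
    1 - γ₁ * u 2 * u 3 - u 2,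
    γ₂ * u 1 - γ₃ * u 2 * u 3 - (1 + γ₂ * u 1) * u 3]

section GlobalExistence

variable {E : Type*} [NormedAddCommGroup E] [NormedSpace ℝ E] [CompleteSpace E]
  {F : E → E} {K C : ℝ≥0}

theorem exists_forall_mem_Ioo_hasDerivAt_of_lipschitzWith (hF : LipschitzWith K F)
    (hC : ∀ x, ‖F x‖ ≤ C) (x₀ : E) (T : ℝ≥0) :
    ∃ α : ℝ → E, α 0 = x₀ ∧ ∀ t ∈ Ioo (-T : ℝ) T, HasDerivAt α (F (α t)) t := by
  have hPL : IsPicardLindelof (fun _ ↦ F) (tmin := -T) (tmax := T)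
      ⟨0, by simp⟩ x₀ (C * T) 0 C K :=
    .of_time_independent (fun x _ ↦ hC x) hF.lipschitzOnWith (by simp)
  obtain ⟨α, hα₀, hα⟩ := hPL.exists_eq_forall_mem_Icc_hasDerivWithinAt₀
  exact ⟨α, hα₀, fun t ht ↦
    (hα t (Ioo_subset_Icc_self ht)).hasDerivAt (Icc_mem_nhds ht.1 ht.2)⟩

theorem exists_forall_hasDerivAt_of_lipschitzWith (hF : LipschitzWith K F)
    (hC : ∀ x, ‖F x‖ ≤ C) (x₀ : E) :
    ∃ u : ℝ → E, u 0 = x₀ ∧ ∀ t, HasDerivAt u (F (u t)) t := by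
  choose α hα₀ hα using fun n : ℕ ↦
    exists_forall_mem_Ioo_hasDerivAt_of_lipschitzWith hF hC x₀ n
  have hglue : ∀ n m : ℕ, ∀ t : ℝ, |t| < n → |t| < m → α n t = α m t := by
    intro n m t hn hm
    have htm : |t| < min (n : ℝ) m := lt_min hn hm
    have hpos : 0 < min (n : ℝ) m := (abs_nonneg t).trans_lt htm
    have hsub_n := Ioo_subset_Ioo (neg_le_neg (min_le_left (n : ℝ) m)) (min_le_left (n : ℝ) m)
    have hsub_m := Ioo_subset_Ioo (neg_le_neg (min_le_right (n : ℝ) m)) (min_le_right (n : ℝ) m)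
    exact ODE_solution_unique_of_mem_Ioo (v := fun _ ↦ F) (s := fun _ ↦ univ)
      (fun _ _ ↦ hF.lipschitzOnWith) ⟨neg_neg_of_pos hpos, hpos⟩
      (fun s hs ↦ ⟨hα n s (hsub_n hs), trivial⟩) (fun s hs ↦ ⟨hα m s (hsub_m hs), trivial⟩)
      (by rw [hα₀, hα₀]) (abs_lt.1 htm)
  let N : ℝ → ℕ := fun t ↦ ⌊|t|⌋₊ + 1
  have hN : ∀ t, |t| < N t := fun t ↦ by simpa [N] using Nat.lt_floor_add_one |t|
  refine ⟨fun t ↦ α (N t) t, by simpa [N] using hα₀ 1, fun t ↦ ?_⟩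
  have hnear : (fun s ↦ α (N s) s) =ᶠ[𝓝 t] α (N t) := by
    filter_upwards [(isOpen_lt continuous_abs continuous_const).mem_nhds (hN t)] with s hs
    exact hglue _ _ s (hN s) hs
  exact (hα (N t) t (abs_lt.1 (hN t))).congr_of_eventuallyEq hnear

end GlobalExistence

theorem eqOn_Ici_of_hasDerivAt_of_locallyLipschitz {E : Type*} [NormedAddCommGroup E]
    [NormedSpace ℝ E] {F : E → E} (hF : LocallyLipschitz F) {u v : ℝ → E} {t₀ : ℝ}
    (hu : ∀ t ≥ t₀, HasDerivAt u (F (u t)) t) (hv : ∀ t ≥ t₀, HasDerivAt v (F (v t)) t)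
    (h₀ : u t₀ = v t₀) : EqOn u v (Ici t₀) := by
  intro T hT
  have hcu : ContinuousOn u (Icc t₀ T) := fun s hs ↦ (hu s hs.1).continuousAt.continuousWithinAt
  have hcv : ContinuousOn v (Icc t₀ T) := fun s hs ↦ (hv s hs.1).continuousAt.continuousWithinAt
  obtain ⟨L, hL⟩ := hF.locallyLipschitzOn.exists_lipschitzOnWith_of_compact
    ((isCompact_Icc.image_of_continuousOn hcu).union (isCompact_Icc.image_of_continuousOn hcv))
  exact ODE_solution_unique_of_mem_Icc_right (v := fun _ ↦ F) (fun _ _ ↦ hL)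
    hcu (fun s hs ↦ (hu s hs.1).hasDerivWithinAt)
    (fun s hs ↦ .inl ⟨s, Ico_subset_Icc_self hs, rfl⟩)
    hcv (fun s hs ↦ (hv s hs.1).hasDerivWithinAt)
    (fun s hs ↦ .inr ⟨s, Ico_subset_Icc_self hs, rfl⟩)
    h₀ ⟨hT, le_rfl⟩

theorem nonneg_of_hasDerivAt_of_nonpos_imp_deriv_nonneg {g g' : ℝ → ℝ}
    (hg : ∀ t ≥ 0, HasDerivAt g (g' t) t) (h₀ : 0 ≤ g 0)
    (hg' : ∀ t ≥ 0, g t ≤ 0 → 0 ≤ g' t) {t : ℝ} (ht : 0 ≤ t) : 0 ≤ g t := by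
  by_contra! hneg
  have hcont : ContinuousOn g (Icc 0 t) := fun s hs ↦ (hg s hs.1).continuousAt.continuousWithinAt
  set A := Icc 0 t ∩ g ⁻¹' Ici 0
  have hA₀ : (0 : ℝ) ∈ A := ⟨⟨le_rfl, ht⟩, h₀⟩
  have hAbdd : BddAbove A := ⟨t, fun s hs ↦ hs.1.2⟩
  have hsA : sSup A ∈ A :=
    (hcont.preimage_isClosed_of_isClosed isClosed_Icc isClosed_Ici).csSup_mem ⟨0, hA₀⟩ hAbdd
  set s := sSup A
  have hst : s < t := lt_of_le_of_ne hsA.1.2 fun h ↦ (h ▸ hsA.2 : 0 ≤ g t).not_gt hneg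
  -- after its last nonnegative time, `g` is negative, hence nondecreasing
  have hmono : MonotoneOn g (Icc s t) := by
    refine monotoneOn_of_deriv_nonneg (convex_Icc s t)
      (hcont.mono (Icc_subset_Icc_left hsA.1.1)) (fun r hr ↦ ?_) (fun r hr ↦ ?_) <;>
      rw [interior_Icc] at hr <;> have hr₀ : 0 ≤ r := hsA.1.1.trans hr.1.le
    · exact (hg r hr₀).differentiableAt.differentiableWithinAt
    · rw [(hg r hr₀).deriv]
      refine hg' r hr₀ (not_lt.1 fun hr' ↦ ?_)
      exact (le_csSup hAbdd ⟨⟨hr₀, hr.2.le⟩, hr'.le⟩).not_gt hr.1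
  exact (hsA.2.trans (hmono ⟨le_rfl, hst.le⟩ ⟨hst.le, le_rfl⟩ hst.le)).not_gt hneg

section Box

variable {ι : Type*} {F : (ι → ℝ) → ι → ℝ} {a b : ι → ℝ}

noncomputable def projBox (hab : a ≤ b) (x : ι → ℝ) : ι → ℝ :=
  fun i ↦ projIcc (a i) (b i) (hab i) (x i)

theorem projBox_mem (hab : a ≤ b) (x : ι → ℝ) : projBox hab x ∈ Icc a b :=
  ⟨fun i ↦ (projIcc (a i) (b i) (hab i) (x i)).2.1,
    fun i ↦ (projIcc (a i) (b i) (hab i) (x i)).2.2⟩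

theorem projBox_of_mem (hab : a ≤ b) {x : ι → ℝ} (hx : x ∈ Icc a b) : projBox hab x = x :=
  funext fun i ↦ congrArg Subtype.val (projIcc_of_mem (hab i) ⟨hx.1 i, hx.2 i⟩)

theorem projBox_apply_of_le (hab : a ≤ b) {x : ι → ℝ} {i : ι} (hx : x i ≤ a i) :
    projBox hab x i = a i :=
  congrArg Subtype.val (projIcc_of_le_left (hab i) hx)

theorem projBox_apply_of_ge (hab : a ≤ b) {x : ι → ℝ} {i : ι} (hx : b i ≤ x i) :
    projBox hab x i = b i :=
  congrArg Subtype.val (projIcc_of_right_le (hab i) hx)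

theorem lipschitzWith_projBox [Fintype ι] (hab : a ≤ b) : LipschitzWith 1 (projBox hab) := by
  refine LipschitzWith.of_dist_le_mul fun x y ↦ (dist_pi_le_iff (by positivity)).2 fun i ↦ ?_
  calc dist (projBox hab x i) (projBox hab y i) ≤ 1 * dist (x i) (y i) :=
        (LipschitzWith.projIcc (hab i)).dist_le_mul (x i) (y i)
    _ ≤ 1 * dist x y := by gcongr; exact dist_le_pi_dist x y i

theorem mem_Icc_of_hasDerivAt_comp_projBox (hab : a ≤ b)
    (hlow : ∀ x ∈ Icc a b, ∀ i, x i = a i → 0 ≤ F x i)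
    (hup : ∀ x ∈ Icc a b, ∀ i, x i = b i → F x i ≤ 0) {u : ℝ → ι → ℝ}
    (hu : ∀ t ≥ 0, HasDerivAt u (F (projBox hab (u t))) t) (hu₀ : u 0 ∈ Icc a b)
    {t : ℝ} (ht : 0 ≤ t) : u t ∈ Icc a b := by
  have hui : ∀ i, ∀ s ≥ 0, HasDerivAt (u · i) (F (projBox hab (u s)) i) s :=
    fun i s hs ↦ hasDerivAt_pi.1 (hu s hs) i
  refine ⟨fun i ↦ ?_, fun i ↦ ?_⟩
  · have := nonneg_of_hasDerivAt_of_nonpos_imp_deriv_nonneg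
      (fun s hs ↦ (hui i s hs).sub_const (a i)) (sub_nonneg.2 (hu₀.1 i))
      (fun s _ hs ↦ hlow _ (projBox_mem hab _) i (projBox_apply_of_le hab (sub_nonpos.1 hs))) ht
    exact sub_nonneg.1 this
  · have := nonneg_of_hasDerivAt_of_nonpos_imp_deriv_nonneg
      (fun s hs ↦ (hui i s hs).const_sub (b i)) (sub_nonneg.2 (hu₀.2 i))
      (fun s _ hs ↦ neg_nonneg.2 <|
        hup _ (projBox_mem hab _) i (projBox_apply_of_ge hab (sub_nonpos.1 hs))) ht
    exact sub_nonneg.1 this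

theorem exists_forall_hasDerivAt_mem_Icc [Fintype ι] {K : ℝ≥0}
    (hF : LipschitzOnWith K F (Icc a b)) (hab : a ≤ b)
    (hlow : ∀ x ∈ Icc a b, ∀ i, x i = a i → 0 ≤ F x i)
    (hup : ∀ x ∈ Icc a b, ∀ i, x i = b i → F x i ≤ 0) {x₀ : ι → ℝ} (hx₀ : x₀ ∈ Icc a b) :
    ∃ u : ℝ → ι → ℝ, u 0 = x₀ ∧ ∀ t ≥ 0, HasDerivAt u (F (u t)) t ∧ u t ∈ Icc a b := by
  have hlip : LipschitzWith K (F ∘ projBox hab) := by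
    simpa using lipschitzOnWith_univ.1 <|
      hF.comp (lipschitzWith_projBox hab).lipschitzOnWith fun x _ ↦ projBox_mem hab x
  obtain ⟨C, hC⟩ := isCompact_Icc.exists_bound_of_continuousOn hF.continuousOn
  obtain ⟨u, hu₀, hu⟩ := exists_forall_hasDerivAt_of_lipschitzWith hlip
    (C := C.toNNReal) (fun x ↦ (hC _ (projBox_mem hab x)).trans (Real.le_coe_toNNReal C)) x₀
  have hmem : ∀ t ≥ 0, u t ∈ Icc a b := fun t ht ↦
    mem_Icc_of_hasDerivAt_comp_projBox hab hlow hup (fun s _ ↦ hu s) (hu₀ ▸ hx₀) ht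
  refine ⟨u, hu₀, fun t ht ↦ ⟨?_, hmem t ht⟩⟩
  simpa [projBox_of_mem hab (hmem t ht)] using hu t

end Box

theorem contDiff_zipField (κ γ₁ γ₂ γ₃ f : ℝ) {n : WithTop ℕ∞} :
    ContDiff ℝ n (zipField κ γ₁ γ₂ γ₃ f) :=
  contDiff_pi.2 fun i ↦ by fin_cases i <;> simp [zipField] <;> fun_prop

section ZIP

variable {κ γ₁ γ₂ γ₃ f : ℝ} {x : Fin 4 → ℝ}

theorem zipField_apply_nonneg_of_eq_zero (hκ : 0 ≤ κ) (hγ₂ : 0 ≤ γ₂) (hf : 0 ≤ f)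
    (hx : x ∈ Icc 0 1) {i : Fin 4} (hxi : x i = 0) : 0 ≤ zipField κ γ₁ γ₂ γ₃ f x i := by
  fin_cases i <;> simp at hxi <;> simp [zipField, hxi]
  · exact mul_nonneg hκ (sq_nonneg _)
  · exact mul_nonneg (hx.1 0) hf
  · exact mul_nonneg hγ₂ (hx.1 1)

theorem zipField_apply_nonpos_of_eq_one (hγ₁ : 0 ≤ γ₁) (hγ₃ : 0 ≤ γ₃) (hf : f ≤ 1)
    (hx : x ∈ Icc 0 1) {i : Fin 4} (hxi : x i = 1) : zipField κ γ₁ γ₂ γ₃ f x i ≤ 0 := by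
  fin_cases i <;> simp at hxi <;> simp [zipField, hxi]
  · exact (mul_le_of_le_one_right (hx.1 0) hf).trans (hx.2 0)
  · exact mul_nonneg hγ₁ (hx.1 3)
  · linarith [mul_nonneg hγ₃ (hx.1 2)]

end ZIP

/-- for every initial value in the cube S = [0,1]⁴ the ZIP
regulatory system has a unique global solution on [0,∞), and it stays in S. -/
theorem zip_global_existence_uniqueness
    (κ γ₁ γ₂ γ₃ f : ℝ) (hκ : 0 < κ) (hγ₁ : 0 < γ₁) (hγ₂ : 0 < γ₂) (hγ₃ : 0 < γ₃)
    (hf : f ∈ Set.Ico (0 : ℝ) 1)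
    (u0 : Fin 4 → ℝ) (hu0 : ∀ i, u0 i ∈ Set.Icc (0 : ℝ) 1) :
    ∃ u : ℝ → Fin 4 → ℝ,
      (u 0 = u0 ∧ ∀ t ≥ (0 : ℝ), HasDerivAt u (zipField κ γ₁ γ₂ γ₃ f (u t)) t) ∧
      (∀ t ≥ (0 : ℝ), ∀ i, u t i ∈ Set.Icc (0 : ℝ) 1) ∧
      (∀ v : ℝ → Fin 4 → ℝ,
        (v 0 = u0 ∧ ∀ t ≥ (0 : ℝ), HasDerivAt v (zipField κ γ₁ γ₂ γ₃ f (v t)) t) →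
        ∀ t ≥ (0 : ℝ), v t = u t) := by
  have hC1 : ContDiff ℝ 1 (zipField κ γ₁ γ₂ γ₃ f) := contDiff_zipField κ γ₁ γ₂ γ₃ f
  obtain ⟨K, hK⟩ :=
    hC1.contDiffOn.exists_lipschitzOnWith one_ne_zero (convex_Icc 0 1) isCompact_Icc
  obtain ⟨u, hu₀, hu⟩ := exists_forall_hasDerivAt_mem_Icc hK zero_le_one
    (fun _ hx _ ↦ zipField_apply_nonneg_of_eq_zero hκ.le hγ₂.le hf.1 hx)
    (fun _ hx _ ↦ zipField_apply_nonpos_of_eq_one hγ₁.le hγ₃.le hf.2.le hx)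
    (x₀ := u0) ⟨fun i ↦ (hu0 i).1, fun i ↦ (hu0 i).2⟩
  refine ⟨u, ⟨hu₀, fun t ht ↦ (hu t ht).1⟩, fun t ht i ↦ ⟨(hu t ht).2.1 i, (hu t ht).2.2 i⟩, ?_⟩
  rintro v ⟨hv₀, hv⟩ t ht
  exact eqOn_Ici_of_hasDerivAt_of_locallyLipschitz hC1.locallyLipschitz hv
    (fun s hs ↦ (hu s hs).1) (hv₀.trans hu₀.symm) ht
end

section
/- Let f ∈ (0,1) and κ, γ₁, γ₂, γ₃ > 0, and let u* ∈ (0,1)⁴ be a steady state of the ZIP regulatory system, i.e. F(u*) = 0. Then u₃* lies in the open interval S₃ = (1/(1+γ₁), 1), u₃* is a root of the polynomial φ, and the other components are determined by u₃* through u₁* = κ·u₃*²/(1+κ·u₃*²), u₂* = f·κ·u₃*²/(1+κ·u₃*²), and u₄* = (1−u₃*)/(γ₁·u₃*). -/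
/-- The quartic polynomial φ whose roots in S₃ correspond to steady states. -/
noncomputable def zipPhi (κ γ₁ γ₂ γ₃ f : ℝ) (x : ℝ) : ℝ :=
  γ₃ * κ * x ^ 4 + (f * γ₂ * (1 + γ₁) + 1 - γ₃) * κ * x ^ 3 +
    (γ₃ - κ - f * γ₂ * κ) * x ^ 2 + (1 - γ₃) * x - 1

/-!
At a steady state the first three equations are solved successively in terms of `x = u₃`:
`u₁ = κx²/(1+κx²)`, `u₂ = f u₁` and `u₄ = (1-x)/(γ₁x)`. Substituting these into the fourth
equation and clearing the denominator `γ₁x(1+κx²)` gives `φ(x) = 0`. The lower bound on `x`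
comes from `1 = x(1 + γ₁u₄) < x(1 + γ₁)`, as `u₄ < 1`.
-/

theorem zipField_eq_zero_iff {κ γ₁ γ₂ γ₃ f : ℝ} {u : Fin 4 → ℝ} :
    zipField κ γ₁ γ₂ γ₃ f u = 0 ↔
      κ * u 2 ^ 2 * (1 - u 0) = u 0 ∧ u 0 * f = u 1 ∧ 1 - γ₁ * u 2 * u 3 = u 2 ∧
        γ₂ * u 1 - γ₃ * u 2 * u 3 = (1 + γ₂ * u 1) * u 3 := by
  simp [zipField, funext_iff, Fin.forall_fin_succ, sub_eq_zero]

theorem zipPhi_eq_zero_of_zipField_eq_zero {κ γ₁ γ₂ γ₃ f : ℝ} {u : Fin 4 → ℝ}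
    (h : zipField κ γ₁ γ₂ γ₃ f u = 0) : zipPhi κ γ₁ γ₂ γ₃ f (u 2) = 0 := by
  obtain ⟨h₀, h₁, h₂, h₃⟩ := zipField_eq_zero_iff.mp h
  unfold zipPhi
  linear_combination γ₁ * u 2 * (1 + κ * u 2 ^ 2) * h₃
    + γ₂ * (γ₁ * u 2 + u 2 - 1) * (f * h₀ + (1 + κ * u 2 ^ 2) * h₁)
    - (1 + κ * u 2 ^ 2) * (γ₃ * u 2 + 1 + γ₂ * u 1) * h₂

theorem eq_div_one_add_of_mul_one_sub_eq {a y : ℝ} (h : a * (1 - y) = y) : y = a / (1 + a) := by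
  have ha : 1 + a ≠ 0 := by
    intro ha
    rw [show a = -1 by linarith] at h
    linarith
  rw [eq_div_iff ha]
  linarith

theorem one_div_one_add_lt_of_sub_mul_eq {γ x y : ℝ} (hγ : 0 < γ) (hx : 0 < x) (hy : y < 1)
    (h : 1 - γ * x * y = x) : 1 / (1 + γ) < x := by
  rw [div_lt_iff₀ (by linarith)]
  nlinarith [mul_pos (mul_pos hγ hx) (sub_pos.mpr hy)]

theorem zip_steady_state_characterization_general
    (κ γ₁ γ₂ γ₃ f : ℝ) (hγ₁ : 0 < γ₁)
    (u : Fin 4 → ℝ) (hu : ∀ i, u i ∈ Set.Ioo (0 : ℝ) 1)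
    (hsteady : zipField κ γ₁ γ₂ γ₃ f u = 0) :
    u 2 ∈ Set.Ioo (1 / (1 + γ₁)) 1 ∧
    zipPhi κ γ₁ γ₂ γ₃ f (u 2) = 0 ∧
    u 0 = κ * (u 2) ^ 2 / (1 + κ * (u 2) ^ 2) ∧
    u 1 = f * κ * (u 2) ^ 2 / (1 + κ * (u 2) ^ 2) ∧
    u 3 = (1 - u 2) / (γ₁ * u 2) := by
  obtain ⟨h₀, h₁, h₂, -⟩ := zipField_eq_zero_iff.mp hsteady
  have hu₀ : u 0 = κ * u 2 ^ 2 / (1 + κ * u 2 ^ 2) := eq_div_one_add_of_mul_one_sub_eq h₀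
  refine ⟨⟨one_div_one_add_lt_of_sub_mul_eq hγ₁ (hu 2).1 (hu 3).2 h₂, (hu 2).2⟩,
    zipPhi_eq_zero_of_zipField_eq_zero hsteady, hu₀, ?_, ?_⟩
  · rw [← h₁, hu₀]
    ring
  · rw [eq_div_iff (mul_pos hγ₁ (hu 2).1).ne']
    linarith

/-- any interior steady state u* of the ZIP regulatory system has
u₃* ∈ S₃ = (1/(1+γ₁), 1), u₃* is a root of φ, and the other components are
determined by u₃*. -/
theorem zip_steady_state_characterization
    (κ γ₁ γ₂ γ₃ f : ℝ) (hκ : 0 < κ) (hγ₁ : 0 < γ₁) (hγ₂ : 0 < γ₂) (hγ₃ : 0 < γ₃)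
    (hf : f ∈ Set.Ioo (0 : ℝ) 1)
    (u : Fin 4 → ℝ) (hu : ∀ i, u i ∈ Set.Ioo (0 : ℝ) 1)
    (hsteady : zipField κ γ₁ γ₂ γ₃ f u = 0) :
    u 2 ∈ Set.Ioo (1 / (1 + γ₁)) 1 ∧
    zipPhi κ γ₁ γ₂ γ₃ f (u 2) = 0 ∧
    u 0 = κ * (u 2) ^ 2 / (1 + κ * (u 2) ^ 2) ∧
    u 1 = f * κ * (u 2) ^ 2 / (1 + κ * (u 2) ^ 2) ∧
    u 3 = (1 - u 2) / (γ₁ * u 2) :=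
  zip_steady_state_characterization_general κ γ₁ γ₂ γ₃ f hγ₁ u hu hsteady
end
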